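/- Fix gap ∈ (0,1) and α > 0. Let M be symmetric positive semidefinite d×d with λ_1(M) ∈ [1/2,2], |λ_1(M) − 1| ≤ α·gap, λ_2(M) ≤ (1 − gap)λ_1(M), and set A = (1 + (1+α)·gap)I − M, assumed invertible. Then λ_2(A^{−1})/λ_1(A^{−1}) ≤ 1/(1 + 1/(2(1+2α))); equivalently, the relative eigengap of A^{−1} satisfies (λ_1(A^{−1}) − λ_2(A^{−1}))/λ_1(A^{−1}) ≥ 1/(3 + 4α). -/

import Mathlib

open Matrix

/-- Relative eigengap of the inverse of the shifted matrix. With `γ = 1 + (1+α)gap`,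
`A = γI − M` invertible, and the two largest eigenvalues of `M` being `μ 0 ≥ μ 1`,
the two largest eigenvalues of `A⁻¹` are `l1 = (γ − μ 0)⁻¹ ≥ l2 = (γ − μ 1)⁻¹`, and
`l2/l1 ≤ 1/(1 + 1/(2(1+2α)))`; equivalently `(l1 − l2)/l1 ≥ 1/(3+4α)`. -/
theorem inverse_shifted_eigengap {d : ℕ} (hd : 2 ≤ d)
    (gap α : ℝ) (hgap : 0 < gap) (hgap1 : gap < 1) (hα : 0 < α)
    (M : Matrix (Fin d) (Fin d) ℝ) (hM : M.PosSemidef)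
    (μ : Fin d → ℝ) (hμa : Antitone μ)
    (hμ : ∃ σ : Equiv.Perm (Fin d), μ = hM.1.eigenvalues ∘ σ)
    (h1 : (1 : ℝ) / 2 ≤ μ ⟨0, by omega⟩) (h2 : μ ⟨0, by omega⟩ ≤ 2)
    (h3 : |μ ⟨0, by omega⟩ - 1| ≤ α * gap)
    (h4 : μ ⟨1, by omega⟩ ≤ (1 - gap) * μ ⟨0, by omega⟩)
    (γ : ℝ) (hγ : γ = 1 + (1 + α) * gap)
    (A : Matrix (Fin d) (Fin d) ℝ)
    (hA : A = γ • (1 : Matrix (Fin d) (Fin d) ℝ) - M) (hAinv : IsUnit A.det)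
    (l1 l2 : ℝ) (hl1 : l1 = (γ - μ ⟨0, by omega⟩)⁻¹)
    (hl2 : l2 = (γ - μ ⟨1, by omega⟩)⁻¹) :
    l2 / l1 ≤ 1 / (1 + 1 / (2 * (1 + 2 * α))) ∧
    1 / (3 + 4 * α) ≤ (l1 - l2) / l1 := by
  have habs := abs_le.mp h3
  set x := μ ⟨0, by omega⟩ with hx
  set y := μ ⟨1, by omega⟩ with hy
  have hax : 0 < γ - x := by nlinarith [habs.2]
  have hxb : γ - x ≤ (1 + 2 * α) * gap := by nlinarith [habs.1]
  have hay : 0 < γ - y := by nlinarith [habs.2, h1, h4]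
  have hc : (0:ℝ) < 1 + 1 / (2 * (1 + 2 * α)) := by positivity
  have key : (γ - x) * (1 + 1 / (2 * (1 + 2 * α))) ≤ γ - y := by
    have h5 : (γ - x) * (1 / (2 * (1 + 2 * α))) ≤ gap / 2 := by
      rw [mul_one_div, div_le_div_iff₀ (by positivity) two_pos]
      nlinarith
    nlinarith
  have hratio : l2 / l1 = (γ - x) / (γ - y) := by
    rw [hl1, hl2, inv_div_inv]
  constructor
  · rw [hratio, div_le_div_iff₀ hay hc]
    nlinarith
  · have h6 : l2 / l1 ≤ 1 / (1 + 1 / (2 * (1 + 2 * α))) := by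
      rw [hratio, div_le_div_iff₀ hay hc]
      nlinarith
    have h7 : (l1 - l2) / l1 = 1 - l2 / l1 := by
      rw [hl1]
      field_simp
    rw [h7]
    have h8 : 1 / (1 + 1 / (2 * (1 + 2 * α))) = 1 - 1 / (3 + 4 * α) := by
      field_simp
      ring
    linarith [h6, h8 ▸ h6]
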